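/- Let G be an N×N complex matrix, v ∈ ℂ^N a vector with G *ᵥ v = γ • v for some γ ∈ ℂ, let σ ∈ ℂ, and let J, E : ℝ → Matrix (Fin n) (Fin n) ℂ be (time-dependent) matrix-valued functions. If ξ : ℝ → ℂⁿ is differentiable and satisfies the block variational equation ξ'(t) = (J t + (σ * γ) • E t) *ᵥ ξ t for all t, then the function η : ℝ → ℂ^(N·n) given by η(t) = v ⊗ₜ ξ(t) (i.e. η(t)(i,j) = v i * ξ t j) is differentiable and satisfies the full network variational equation η'(t) = (I_N ⊗ J t + σ • (G ⊗ E t)) *ᵥ η t for all t. -/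
import Mathlib


open Matrix
open scoped Kronecker

lemma kron_mulVec_tensor {N n : ℕ} (A : Matrix (Fin N) (Fin N) ℂ)
    (B : Matrix (Fin n) (Fin n) ℂ) (x : Fin N → ℂ) (y : Fin n → ℂ) :
    (A ⊗ₖ B) *ᵥ (fun p : Fin N × Fin n => x p.1 * y p.2) =
      fun p : Fin N × Fin n => (A *ᵥ x) p.1 * (B *ᵥ y) p.2 := by
  funext p
  simp only [mulVec, dotProduct, kroneckerMap_apply, Fintype.sum_prod_type,
    Finset.sum_mul, Finset.mul_sum]
  rw [Finset.sum_comm]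
  exact Finset.sum_congr rfl fun j _ => Finset.sum_congr rfl fun i _ => by ring

/-- Each eigenmode solution `ξ` of the block variational equation
`ξ' = (J + σγ E) ξ` lifts, via `η(t) = v ⊗ₜ ξ(t)`, to a solution of the full
network variational equation `η' = (I_N ⊗ J + σ (G ⊗ E)) η`. -/
theorem eigenmode_lifts_to_network_variational_equation {N n : ℕ}
    (G : Matrix (Fin N) (Fin N) ℂ) (v : Fin N → ℂ) (γ σ : ℂ)
    (hv : G *ᵥ v = γ • v)
    (J E : ℝ → Matrix (Fin n) (Fin n) ℂ)
    (ξ : ℝ → Fin n → ℂ) (hξ : Differentiable ℝ ξ)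
    (hode : ∀ t, deriv ξ t = (J t + (σ * γ) • E t) *ᵥ ξ t) :
    Differentiable ℝ (fun t (p : Fin N × Fin n) => v p.1 * ξ t p.2) ∧
    ∀ t, deriv (fun t (p : Fin N × Fin n) => v p.1 * ξ t p.2) t =
      ((1 : Matrix (Fin N) (Fin N) ℂ) ⊗ₖ J t + σ • (G ⊗ₖ E t)) *ᵥ
        (fun p : Fin N × Fin n => v p.1 * ξ t p.2) := by
  have hd : ∀ t, HasDerivAt (fun t (p : Fin N × Fin n) => v p.1 * ξ t p.2)
      (fun p => v p.1 * deriv ξ t p.2) t := by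
    intro t
    apply hasDerivAt_pi.2
    intro p
    exact ((hasDerivAt_pi.mp (hξ t).hasDerivAt) p.2).const_mul (v p.1)
  refine ⟨fun t => (hd t).differentiableAt, fun t => ?_⟩
  rw [(hd t).deriv, add_mulVec, smul_mulVec, kron_mulVec_tensor,
    kron_mulVec_tensor, one_mulVec, hv]
  funext p
  simp only [hode, add_mulVec, smul_mulVec, Pi.add_apply, Pi.smul_apply,
    smul_eq_mul]
  ring
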